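/- Let u ∈ H¹(ℝ), R > 0, and let g : ℝ → ℝ be bounded and Lipschitz with g = 0 on [−R, R]. Then ∫_ℝ g(x)⁴|u(x)|⁶ dx ≤ 8‖u‖⁴_{L²(|x|≥R)} ‖g²u'‖²_{L²(|x|≥R)} + 2‖u‖⁶_{L²(|x|≥R)} ‖(g²)'‖²_{L^∞(|x|≥R)}. -/

import Mathlib

/-!
The function `F = g² ‖u‖²` vanishes at `±R`, so on `|x| ≥ R` the fundamental theorem of calculus
bounds `F x` by `∫_{|y| ≥ R} |F'|`. Since `F' = (g²)' ‖u‖² + 2 g² ⟪u, u'⟫`, Cauchy–Schwarz gives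
`sup F ≤ M ‖u‖² + 2 ‖u‖ ‖g² u'‖` (norms in `L²(|x| ≥ R)`), and then
`∫ g⁴ ‖u‖⁶ = ∫ F² ‖u‖² ≤ (sup F)² ‖u‖²` together with `(a + b)² ≤ 2a² + 2b²` gives the claim.
-/

open MeasureTheory Set

theorem integral_norm_mul_norm_le_sqrt_mul_sqrt {α E : Type*} [MeasurableSpace α]
    {μ : Measure α} [NormedAddCommGroup E] {f g : α → E} (hf : MemLp f 2 μ) (hg : MemLp g 2 μ) :
    ∫ a, ‖f a‖ * ‖g a‖ ∂μ ≤ √(∫ a, ‖f a‖ ^ 2 ∂μ) * √(∫ a, ‖g a‖ ^ 2 ∂μ) := by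
  have h := integral_mul_norm_le_Lp_mul_Lq Real.HolderConjugate.two_two
    (by rwa [ENNReal.ofReal_ofNat] : MemLp f _ μ) (by rwa [ENNReal.ofReal_ofNat] : MemLp g _ μ)
  simpa only [Real.rpow_two, ← Real.sqrt_eq_rpow] using h

theorem setIntegral_sq_mul_le {α : Type*} [MeasurableSpace α] {μ : Measure α} {f h : α → ℝ}
    {s : Set α} {K : ℝ} (hs : MeasurableSet s) (hf : AEStronglyMeasurable f (μ.restrict s))
    (hfK : ∀ x ∈ s, |f x| ≤ K) (hh : IntegrableOn h s μ) (hh0 : ∀ x ∈ s, 0 ≤ h x) :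
    ∫ x in s, f x ^ 2 * h x ∂μ ≤ K ^ 2 * ∫ x in s, h x ∂μ := by
  have hf2K : ∀ x ∈ s, f x ^ 2 ≤ K ^ 2 := fun x hx =>
    sq_abs (f x) ▸ pow_le_pow_left₀ (abs_nonneg _) (hfK x hx) 2
  have hint : IntegrableOn (fun x => f x ^ 2 * h x) s μ :=
    hh.bdd_mul (hf.pow 2) (ae_restrict_of_forall_mem hs fun x hx => by
      simpa only [Real.norm_eq_abs, abs_sq] using hf2K x hx)
  rw [← integral_const_mul]
  exact setIntegral_mono_on hint (hh.const_mul _) hs fun x hx =>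
    mul_le_mul_of_nonneg_right (hf2K x hx) (hh0 x hx)

section FundamentalTheorem

variable {F : ℝ → ℝ} {s : Set ℝ}

theorem abs_sub_le_setIntegral_abs_deriv {a b : ℝ} (hF : ∀ y ∈ s, DifferentiableAt ℝ F y)
    (hab : a ≤ b) (hs : Icc a b ⊆ s) (hint : IntegrableOn (deriv F) s) :
    |F b - F a| ≤ ∫ y in s, |deriv F y| := by
  rw [← uIcc_of_le hab] at hs
  rw [← intervalIntegral.integral_eq_sub_of_hasDerivAt (fun y hy => (hF y (hs hy)).hasDerivAt)
    (hint.mono_set hs).intervalIntegrable]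
  calc |∫ y in a..b, deriv F y|
      ≤ ∫ y in a..b, |deriv F y| := intervalIntegral.abs_integral_le_integral_abs hab
    _ = ∫ y in Ioc a b, |deriv F y| := intervalIntegral.integral_of_le hab
    _ ≤ ∫ y in s, |deriv F y| :=
      setIntegral_mono_set hint.abs (.of_forall fun _ => abs_nonneg _)
        (Ioc_subset_Icc_self.trans (uIcc_of_le hab ▸ hs)).eventuallyLE

theorem abs_le_setIntegral_abs_deriv_of_eq_zero {R x : ℝ}
    (hF : ∀ y ∈ {y : ℝ | R ≤ |y|}, DifferentiableAt ℝ F y) (hFR : F R = 0) (hFmR : F (-R) = 0)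
    (hint : IntegrableOn (deriv F) {y : ℝ | R ≤ |y|}) (hx : R ≤ |x|) :
    |F x| ≤ ∫ y in {y : ℝ | R ≤ |y|}, |deriv F y| := by
  rcases le_abs'.mp hx with hxR | hRx
  · have h := abs_sub_le_setIntegral_abs_deriv hF hxR
      (fun y hy => le_abs'.mpr (Or.inl hy.2)) hint
    rwa [hFmR, zero_sub, abs_neg] at h
  · have h := abs_sub_le_setIntegral_abs_deriv hF hRx
      (fun y hy => le_abs'.mpr (Or.inr hy.1)) hint
    rwa [hFR, sub_zero] at h

end FundamentalTheorem

section WeightedEstimate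

variable {E : Type*} [NormedAddCommGroup E] [InnerProductSpace ℝ E] {w : ℝ → ℝ} {u : ℝ → E}

theorem abs_deriv_mul_norm_sq_le {x : ℝ} (hw : DifferentiableAt ℝ w x)
    (hu : DifferentiableAt ℝ u x) :
    |deriv (fun y => w y * ‖u y‖ ^ 2) x| ≤
      |deriv w x| * ‖u x‖ ^ 2 + 2 * (|w x| * ‖deriv u x‖ * ‖u x‖) := by
  have hF : HasDerivAt (fun y => w y * ‖u y‖ ^ 2)
      (deriv w x * ‖u x‖ ^ 2 + w x * (2 * inner ℝ (u x) (deriv u x))) x :=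
    hw.hasDerivAt.mul hu.hasDerivAt.norm_sq
  rw [hF.deriv]
  have hinner : |inner ℝ (u x) (deriv u x)| ≤ ‖deriv u x‖ * ‖u x‖ :=
    (abs_real_inner_le_norm _ _).trans_eq (mul_comm _ _)
  calc |deriv w x * ‖u x‖ ^ 2 + w x * (2 * inner ℝ (u x) (deriv u x))|
      ≤ |deriv w x| * ‖u x‖ ^ 2 + 2 * (|w x| * |inner ℝ (u x) (deriv u x)|) := by
        refine (abs_add_le _ _).trans_eq ?_
        rw [abs_mul, abs_mul, abs_mul, abs_sq, abs_two]
        ring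
    _ ≤ _ := by rw [mul_assoc |w x|]; gcongr

/-- The Ogawa–Tsutsumi weighted `L^∞` estimate. -/
theorem abs_mul_norm_sq_le_of_eq_zero {R M x : ℝ} (hw : Differentiable ℝ w)
    (hu : Differentiable ℝ u) (hwR : w R = 0) (hwmR : w (-R) = 0)
    (hM : ∀ y ∈ {y : ℝ | R ≤ |y|}, |deriv w y| ≤ M)
    (hu2 : MemLp u 2 (volume.restrict {y : ℝ | R ≤ |y|}))
    (hwu' : MemLp (fun y => w y * ‖deriv u y‖) 2 (volume.restrict {y : ℝ | R ≤ |y|}))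
    (hx : R ≤ |x|) :
    |w x| * ‖u x‖ ^ 2 ≤
      M * (∫ y in {y : ℝ | R ≤ |y|}, ‖u y‖ ^ 2) +
        2 * (√(∫ y in {y : ℝ | R ≤ |y|}, (w y * ‖deriv u y‖) ^ 2) *
          √(∫ y in {y : ℝ | R ≤ |y|}, ‖u y‖ ^ 2)) := by
  set S := {y : ℝ | R ≤ |y|}
  have hS : MeasurableSet S := measurableSet_le measurable_const continuous_abs.measurable
  have hu2' : IntegrableOn (fun y => ‖u y‖ ^ 2) S :=
    (memLp_two_iff_integrable_sq_norm hu2.1).mp hu2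
  have hcross : IntegrableOn (fun y => ‖w y * ‖deriv u y‖‖ * ‖u y‖) S :=
    hwu'.norm.integrable_mul hu2.norm
  set φ := fun y => M * ‖u y‖ ^ 2 + 2 * (‖w y * ‖deriv u y‖‖ * ‖u y‖)
  have hφ : IntegrableOn φ S := (hu2'.const_mul M).add (hcross.const_mul 2)
  have hbound : ∀ y ∈ S, |deriv (fun y => w y * ‖u y‖ ^ 2) y| ≤ φ y := fun y hy => by
    refine (abs_deriv_mul_norm_sq_le (hw y) (hu y)).trans ?_
    simp only [φ, norm_mul, Real.norm_eq_abs, abs_norm]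
    gcongr
    exact hM y hy
  have hint : IntegrableOn (deriv fun y => w y * ‖u y‖ ^ 2) S :=
    hφ.mono' (measurable_deriv _).aestronglyMeasurable (ae_restrict_of_forall_mem hS hbound)
  calc |w x| * ‖u x‖ ^ 2 = |w x * ‖u x‖ ^ 2| := by rw [abs_mul, abs_sq]
    _ ≤ ∫ y in S, |deriv (fun y => w y * ‖u y‖ ^ 2) y| :=
      abs_le_setIntegral_abs_deriv_of_eq_zero (F := fun y => w y * ‖u y‖ ^ 2)
        (fun y _ => (hw y).mul ((hu y).norm_sq ℝ)) (by rw [hwR, zero_mul])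
        (by rw [hwmR, zero_mul]) hint hx
    _ ≤ ∫ y in S, φ y := setIntegral_mono_on hint.abs hφ hS hbound
    _ = M * (∫ y in S, ‖u y‖ ^ 2) + 2 * ∫ y in S, ‖w y * ‖deriv u y‖‖ * ‖u y‖ := by
      rw [integral_add (hu2'.const_mul M) (hcross.const_mul 2), integral_const_mul,
        integral_const_mul]
    _ ≤ _ := by
      gcongr
      simpa only [norm_norm, Real.norm_eq_abs, sq_abs, abs_abs, abs_norm] using
        integral_norm_mul_norm_le_sqrt_mul_sqrt hwu'.norm hu2.norm

end WeightedEstimate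

theorem stmt18_general (u : ℝ → ℂ) (g : ℝ → ℝ) (R : ℝ) (hR : 0 < R)
    (hu : ContDiff ℝ 1 u) (hu2 : MemLp u 2 volume)
    (hu'2 : MemLp (deriv u) 2 volume)
    (hgd : Differentiable ℝ g) (hgb : ∃ C, ∀ x, |g x| ≤ C)
    (hg0 : ∀ x : ℝ, |x| ≤ R → g x = 0)
    (M : ℝ) (hM : ∀ x ∈ {x : ℝ | R ≤ |x|}, |deriv (fun y => (g y)^2) x| ≤ M) :
    ∫ x : ℝ, (g x)^4 * ‖u x‖^6 ≤
      8 * (∫ x in {x : ℝ | R ≤ |x|}, ‖u x‖^2)^2 *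
        (∫ x in {x : ℝ | R ≤ |x|}, ((g x)^2 * ‖deriv u x‖)^2)
      + 2 * (∫ x in {x : ℝ | R ≤ |x|}, ‖u x‖^2)^3 * M^2 := by
  obtain ⟨C, hC⟩ := hgb
  set S := {x : ℝ | R ≤ |x|}
  set A := ∫ x in S, ‖u x‖ ^ 2
  set B := ∫ x in S, ((g x) ^ 2 * ‖deriv u x‖) ^ 2
  have hS : MeasurableSet S := measurableSet_le measurable_const continuous_abs.measurable
  have hg2 : MemLp (fun x => g x ^ 2) ⊤ volume :=
    memLp_top_of_bound (hgd.continuous.pow 2).aestronglyMeasurable (C ^ 2) (.of_forall fun x => by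
      rw [Real.norm_eq_abs, abs_sq, ← sq_abs]
      exact pow_le_pow_left₀ (abs_nonneg _) (hC x) 2)
  have hK : ∀ x ∈ S, |g x ^ 2 * ‖u x‖ ^ 2| ≤ M * A + 2 * (√B * √A) := fun x hx => by
    rw [abs_mul, abs_sq (‖u x‖)]
    exact abs_mul_norm_sq_le_of_eq_zero (w := fun y => g y ^ 2) (hgd.pow 2)
      (hu.differentiable one_ne_zero) (by simp [hg0 R (abs_of_pos hR).le])
      (by simp [hg0 (-R) (by rw [abs_neg, abs_of_pos hR])]) hM
      (hu2.restrict S) ((hu'2.norm.mul' hg2).restrict S) hx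
  have hA : 0 ≤ A := setIntegral_nonneg hS fun x _ => sq_nonneg _
  have hB : 0 ≤ B := setIntegral_nonneg hS fun x _ => sq_nonneg _
  calc ∫ x, g x ^ 4 * ‖u x‖ ^ 6
      = ∫ x in S, (g x ^ 2 * ‖u x‖ ^ 2) ^ 2 * ‖u x‖ ^ 2 := by
        rw [setIntegral_eq_integral_of_forall_compl_eq_zero fun x hx => by
          rw [hg0 x (not_le.mp hx).le]; ring]
        ring_nf
    _ ≤ (M * A + 2 * (√B * √A)) ^ 2 * A :=
      setIntegral_sq_mul_le hS ((hgd.continuous.pow 2).aestronglyMeasurable.mul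
        (hu2.1.norm.pow 2).restrict) hK
        ((memLp_two_iff_integrable_sq_norm hu2.1).mp hu2).integrableOn fun x _ => sq_nonneg _
    _ ≤ (2 * (M * A) ^ 2 + 8 * (√B * √A) ^ 2) * A := by
      gcongr
      exact add_sq_le.trans_eq (by ring)
    _ = _ := by rw [mul_pow √B, Real.sq_sqrt hA, Real.sq_sqrt hB]; ring

theorem stmt18 (u : ℝ → ℂ) (g : ℝ → ℝ) (R : ℝ) (hR : 0 < R)
    (hu : ContDiff ℝ 1 u) (hu2 : MemLp u 2 volume)
    (hu'2 : MemLp (deriv u) 2 volume)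
    (hgd : Differentiable ℝ g) (hgb : ∃ C, ∀ x, |g x| ≤ C)
    (L : NNReal) (hgl : LipschitzWith L g)
    (hg0 : ∀ x : ℝ, |x| ≤ R → g x = 0)
    (M : ℝ) (hM : ∀ x ∈ {x : ℝ | R ≤ |x|}, |deriv (fun y => (g y)^2) x| ≤ M) :
    ∫ x : ℝ, (g x)^4 * ‖u x‖^6 ≤
      8 * (∫ x in {x : ℝ | R ≤ |x|}, ‖u x‖^2)^2 *
        (∫ x in {x : ℝ | R ≤ |x|}, ((g x)^2 * ‖deriv u x‖)^2)
      + 2 * (∫ x in {x : ℝ | R ≤ |x|}, ‖u x‖^2)^3 * M^2 :=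
  stmt18_general u g R hR hu hu2 hu'2 hgd hgb hg0 M hM
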